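/- Let q ≡ 3 (mod 4) be a prime power and k ≥ 1 an integer with q > 4k − 5. Then every set S of k vertices of the Paley tournament P_q is a mutual-visibility set; hence μ(P_q) ≥ k. -/

import Mathlib

variable {V : Type*}

/-- `l` is a directed walk from `u` to `v` in the digraph with arc relation `A`. -/
def IsWalk (A : V → V → Prop) (u v : V) (l : List V) : Prop :=
  l.head? = some u ∧ l.getLast? = some v ∧ l.Chain' A

/-- A directed path: a walk with pairwise distinct vertices. -/
def IsDipath (A : V → V → Prop) (u v : V) (l : List V) : Prop :=
  IsWalk A u v l ∧ l.Nodup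

/-- The internal vertices of a walk given by its vertex list. -/
def internal (l : List V) : List V := l.tail.dropLast

/-- Directed distance: the least number of arcs of a directed walk from `u` to `v`,
`⊤` if there is none. -/
noncomputable def ddist (A : V → V → Prop) (u v : V) : ℕ∞ :=
  sInf {n : ℕ∞ | ∃ l : List V, IsWalk A u v l ∧ (l.length : ℕ∞) = n + 1}

/-- `y` is visible from `x` with respect to `S`: some shortest directed `x,y`-walk
has no internal vertex in `S`. -/
def Visible (A : V → V → Prop) (S : Set V) (x y : V) : Prop :=
  ∃ l : List V, IsWalk A x y l ∧ (l.length : ℕ∞) = ddist A x y + 1 ∧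
    ∀ w ∈ internal l, w ∉ S

/-- `S` is a mutual-visibility set of the digraph with arc relation `A`. -/
def MutVisSet (A : V → V → Prop) (S : Set V) : Prop :=
  ∀ x ∈ S, ∀ y ∈ S, x ≠ y → Visible A S x y ∧ Visible A S y x

/-- The mutual-visibility number. -/
noncomputable def mu (A : V → V → Prop) : ℕ :=
  sSup {n : ℕ | ∃ S : Set V, MutVisSet A S ∧ S.ncard = n}

/-- Reachability by a directed path. -/
def Reach (A : V → V → Prop) : V → V → Prop := Relation.ReflTransGen A

/-- A digraph is strongly connected if every vertex reaches every other. -/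
def StrongConn (A : V → V → Prop) : Prop := ∀ u v : V, Reach A u v

/-- The strongly connected component containing `v`. -/
def scc (A : V → V → Prop) (v : V) : Set V := {u | Reach A u v ∧ Reach A v u}

/-- Arc of the Paley tournament: `u → v` iff `v - u` is a nonzero square. -/
def paleyArc {F : Type*} [Field F] (u v : F) : Prop :=
  v - u ≠ 0 ∧ IsSquare (v - u)

/-!
An arc `x → y` of `P_q` is itself a shortest path, and since `y ↛ x` the way back has length
two through any `w` with `y → w → x`. Writing the indicator of `u → v` (for `u ≠ v`) as
`(1 + χ (v - u)) / 2` with `χ` the quadratic character, the number of such `w` is `(q + 1) / 4`: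
the linear terms are character sums and vanish, and the cross term is the Jacobi sum
`J(χ, χ) = -χ (-1) = 1` because `-1` is a nonsquare when `q ≡ 3 (mod 4)`. When `4 |S| < q + 9`
these `(q + 1) / 4` vertices cannot all lie in `S \ {x, y}`, so one of them is outside `S`.
-/

open Finset

section Digraph

variable {A : V → V → Prop} {x y w : V}

lemma isWalk_pair (h : A x y) : IsWalk A x y [x, y] :=
  ⟨rfl, rfl, (.cons_cons h (List.isChain_singleton y))⟩

lemma isWalk_triple (h₁ : A x w) (h₂ : A w y) : IsWalk A x y [x, w, y] :=
  ⟨rfl, rfl, (.cons_cons h₁ (.cons_cons h₂ (List.isChain_singleton y)))⟩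

lemma ddist_le_of_isWalk {l : List V} {n : ℕ} (hl : IsWalk A x y l) (hn : l.length = n + 1) :
    ddist A x y ≤ n :=
  sInf_le ⟨l, hl, by simp [hn]⟩

lemma le_ddist_of_forall_isWalk {n : ℕ} (h : ∀ l, IsWalk A x y l → n + 1 ≤ l.length) :
    (n : ℕ∞) ≤ ddist A x y := by
  refine le_sInf ?_
  rintro m ⟨l, hl, hm⟩
  induction m with
  | top => exact le_top
  | coe m =>
    have : l.length = m + 1 := by exact_mod_cast hm
    have := h l hl
    exact_mod_cast (by omega : n ≤ m)

lemma IsWalk.two_le_length {l : List V} (hl : IsWalk A x y l) (hxy : x ≠ y) : 2 ≤ l.length := by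
  obtain ⟨hhead, hlast, -⟩ := hl
  rcases l with _ | ⟨a, _ | ⟨b, l⟩⟩ <;> simp_all

lemma IsWalk.three_le_length {l : List V} (hl : IsWalk A x y l) (hxy : x ≠ y) (hA : ¬A x y) :
    3 ≤ l.length := by
  obtain ⟨hhead, hlast, hchain⟩ := hl
  replace hchain : l.IsChain A := hchain
  rcases l with _ | ⟨a, _ | ⟨b, _ | ⟨c, l⟩⟩⟩ <;> simp_all [List.isChain_cons_cons]

lemma ddist_eq_one (hxy : x ≠ y) (h : A x y) : ddist A x y = 1 :=
  le_antisymm (ddist_le_of_isWalk (isWalk_pair h) rfl)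
    (le_ddist_of_forall_isWalk fun _ hl ↦ hl.two_le_length hxy)

lemma ddist_eq_two (hxy : x ≠ y) (hA : ¬A x y) (h₁ : A x w) (h₂ : A w y) : ddist A x y = 2 :=
  le_antisymm (ddist_le_of_isWalk (isWalk_triple h₁ h₂) rfl)
    (le_ddist_of_forall_isWalk fun _ hl ↦ hl.three_le_length hxy hA)

lemma visible_of_adj (S : Set V) (hxy : x ≠ y) (h : A x y) : Visible A S x y :=
  ⟨[x, y], isWalk_pair h, by rw [ddist_eq_one hxy h]; rfl, by simp [internal]⟩

lemma visible_of_adj_adj {S : Set V} (hxy : x ≠ y) (hA : ¬A x y) (h₁ : A x w) (h₂ : A w y)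
    (hw : w ∉ S) : Visible A S x y :=
  ⟨[x, w, y], isWalk_triple h₁ h₂, by rw [ddist_eq_two hxy hA h₁ h₂]; rfl,
    by simpa [internal] using hw⟩

lemma mutVisSet_of_forall_adj {S : Set V} (hasymm : ∀ x y, A x y → ¬A y x)
    (htotal : ∀ x y, x ≠ y → A x y ∨ A y x)
    (hback : ∀ x ∈ S, ∀ y ∈ S, A x y → ∃ w ∉ S, A y w ∧ A w x) : MutVisSet A S := by
  have hvis : ∀ x ∈ S, ∀ y ∈ S, A x y → Visible A S x y ∧ Visible A S y x := by
    intro x hx y hy h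
    have hxy : x ≠ y := by rintro rfl; exact hasymm x x h h
    obtain ⟨w, hw, h₁, h₂⟩ := hback x hx y hy h
    exact ⟨visible_of_adj S hxy h, visible_of_adj_adj hxy.symm (hasymm x y h) h₁ h₂ hw⟩
  intro x hx y hy hxy
  rcases htotal x y hxy with h | h
  · exact hvis x hx y hy h
  · exact (hvis y hy x hx h).symm

lemma ncard_le_mu [Finite V] {S : Set V} (h : MutVisSet A S) : S.ncard ≤ mu A :=
  le_csSup ⟨Nat.card V, by rintro _ ⟨T, -, rfl⟩; exact Set.ncard_le_card T⟩ ⟨S, h, rfl⟩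

end Digraph

section Paley

lemma paleyArc_irrefl {F : Type*} [Field F] (u : F) : ¬paleyArc u u := fun h ↦ h.1 (sub_self u)

variable {F : Type*} [Field F] [Fintype F]

lemma paleyArc_iff_quadraticChar [DecidableEq F] {u v : F} :
    paleyArc u v ↔ quadraticChar F (v - u) = 1 := by
  by_cases h : v - u = 0
  · simp [paleyArc, h]
  · rw [quadraticChar_one_iff_isSquare h]
    simp [paleyArc, h]

open Classical in
lemma one_add_quadraticChar_sub [DecidableEq F] {u v : F} (h : u ≠ v) :
    1 + quadraticChar F (v - u) = if paleyArc u v then 2 else 0 := by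
  rcases quadraticChar_dichotomy (sub_ne_zero.mpr h.symm) with hχ | hχ <;>
    simp [paleyArc_iff_quadraticChar, hχ]

lemma quadraticChar_neg_of_card_mod_four [DecidableEq F] (hF : Fintype.card F % 4 = 3) (a : F) :
    quadraticChar F (-a) = -quadraticChar F a := by
  have h : quadraticChar F (-1) = -1 :=
    quadraticChar_neg_one_iff_not_isSquare.mpr (by rw [FiniteField.isSquare_neg_one_iff]; omega)
  rw [neg_eq_neg_one_mul, map_mul, h, neg_one_mul]

lemma paleyArc_asymm (hF : Fintype.card F % 4 = 3) {u v : F} (h : paleyArc u v) :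
    ¬paleyArc v u := by
  classical
  rw [paleyArc_iff_quadraticChar] at *
  rw [← neg_sub, quadraticChar_neg_of_card_mod_four hF, h]
  norm_num

lemma paleyArc_total (hF : Fintype.card F % 4 = 3) {u v : F} (h : u ≠ v) :
    paleyArc u v ∨ paleyArc v u := by
  classical
  simp only [paleyArc_iff_quadraticChar]
  rcases quadraticChar_dichotomy (sub_ne_zero.mpr h.symm) with hχ | hχ
  · exact .inl hχ
  · right
    rw [← neg_sub, quadraticChar_neg_of_card_mod_four hF, hχ, neg_neg]

lemma ringChar_ne_two_of_card_mod_four (hF : Fintype.card F % 4 = 3) : ringChar F ≠ 2 := by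
  rw [Ne, FiniteField.even_card_iff_char_two]; omega

/-- The substitution `w = y + (x - y) t` turns this sum into the Jacobi sum `J(χ, χ⁻¹)`. -/
lemma sum_quadraticChar_sub_mul_quadraticChar_sub [DecidableEq F] (hF : ringChar F ≠ 2) {x y : F}
    (hxy : x ≠ y) :
    ∑ w, quadraticChar F (w - y) * quadraticChar F (x - w) = -quadraticChar F (-1) := by
  set χ := quadraticChar F
  have hd : x - y ≠ 0 := sub_ne_zero.mpr hxy
  calc ∑ w, χ (w - y) * χ (x - w)
      = ∑ t, χ ((x - y) * t) * χ ((x - y) * (1 - t)) := by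
        rw [← ((Equiv.mulLeft₀ (x - y) hd).trans (Equiv.addLeft y)).sum_comp]
        refine Finset.sum_congr rfl fun t _ ↦ ?_
        simp only [Equiv.trans_apply, Equiv.mulLeft₀_apply, Equiv.coe_addLeft]
        ring_nf
    _ = ∑ t, χ t * χ (1 - t) := by
        refine Finset.sum_congr rfl fun t _ ↦ ?_
        simp only [map_mul]
        linear_combination (χ t * χ (1 - t)) * quadraticChar_sq_one hd
    _ = jacobiSum χ χ⁻¹ := by rw [(quadraticChar_isQuadratic F).inv]; rfl
    _ = -χ (-1) := jacobiSum_nontrivial_inv (quadraticChar_ne_one hF)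

open Classical in
theorem four_mul_card_paleyArc_back (hF : Fintype.card F % 4 = 3) {x y : F} (hxy : paleyArc x y) :
    4 * #{w | paleyArc y w ∧ paleyArc w x} = Fintype.card F + 1 := by
  set χ := quadraticChar F
  have hχxy : χ (x - y) = -1 := by
    rw [← neg_sub, quadraticChar_neg_of_card_mod_four hF, paleyArc_iff_quadraticChar.mp hxy]
  have hne : x ≠ y := by rintro rfl; exact paleyArc_irrefl x hxy
  -- at `w = y` and at `w = x` one factor is `1 + χ (x - y) = 0`
  have hterm : ∀ w, (1 + χ (w - y)) * (1 + χ (x - w)) =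
      if paleyArc y w ∧ paleyArc w x then 4 else 0 := by
    intro w
    by_cases hwy : w = y
    · subst hwy; simp [hχxy, paleyArc_irrefl]
    by_cases hwx : w = x
    · subst hwx; simp [hχxy, paleyArc_irrefl]
    rw [one_add_quadraticChar_sub (Ne.symm hwy), one_add_quadraticChar_sub hwx]
    split_ifs <;> simp_all
  have hsum_left : ∑ w, χ (w - y) = 0 :=
    (Fintype.sum_equiv (Equiv.subRight y) _ χ fun _ ↦ rfl).trans
      (quadraticChar_sum_zero (ringChar_ne_two_of_card_mod_four hF))
  have hsum_right : ∑ w, χ (x - w) = 0 :=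
    (Fintype.sum_equiv (Equiv.subLeft x) _ χ fun _ ↦ rfl).trans
      (quadraticChar_sum_zero (ringChar_ne_two_of_card_mod_four hF))
  have hjacobi : ∑ w, χ (w - y) * χ (x - w) = 1 := by
    rw [sum_quadraticChar_sub_mul_quadraticChar_sub (ringChar_ne_two_of_card_mod_four hF) hne,
      quadraticChar_neg_of_card_mod_four hF, map_one, neg_neg]
  have : (4 * #{w | paleyArc y w ∧ paleyArc w x} : ℤ) = Fintype.card F + 1 :=
    calc (4 * #{w | paleyArc y w ∧ paleyArc w x} : ℤ)
        = ∑ w, if paleyArc y w ∧ paleyArc w x then 4 else 0 := by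
          rw [Finset.sum_ite, sum_const, sum_const_zero, nsmul_eq_mul, add_zero, mul_comm]
      _ = ∑ w, (1 + χ (w - y)) * (1 + χ (x - w)) := by simp only [hterm]
      _ = Fintype.card F + ∑ w, χ (w - y) + ∑ w, χ (x - w)
            + ∑ w, χ (w - y) * χ (x - w) := by
          simp only [add_mul, one_mul, mul_add, mul_one, sum_add_distrib, sum_const, card_univ,
            nsmul_eq_mul]
          ring
      _ = Fintype.card F + 1 := by rw [hsum_left, hsum_right, hjacobi]; ring
  exact_mod_cast this

theorem exists_paleyArc_back_notMem (hF : Fintype.card F % 4 = 3) {S : Set F}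
    (hS : 4 * S.ncard < Fintype.card F + 9) {x y : F} (hx : x ∈ S) (hy : y ∈ S)
    (hxy : paleyArc x y) : ∃ w ∉ S, paleyArc y w ∧ paleyArc w x := by
  classical
  by_contra! hcon
  set W : Finset F := {w | paleyArc y w ∧ paleyArc w x}
  have hxW : x ∉ W := by simp [W, paleyArc_irrefl]
  have hyW : y ∉ W := by simp [W, paleyArc_irrefl]
  have hne : x ≠ y := by rintro rfl; exact paleyArc_irrefl x hxy
  have hsub : (↑(insert x (insert y W)) : Set F) ⊆ S := by
    intro w hw
    simp only [coe_insert, Set.mem_insert_iff, mem_coe] at hw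
    rcases hw with rfl | rfl | hw
    · exact hx
    · exact hy
    · simp only [W, mem_filter, mem_univ, true_and] at hw
      by_contra hwS
      exact hcon w hwS hw.1 hw.2
  have hle := Set.ncard_le_ncard hsub (Set.toFinite S)
  rw [Set.ncard_coe_finset, card_insert_of_notMem (by simp [hne, hxW]),
    card_insert_of_notMem hyW] at hle
  have hcount : 4 * #W = Fintype.card F + 1 := four_mul_card_paleyArc_back hF hxy
  omega

end Paley

theorem stmt14_general (F : Type*) [Field F] [Fintype F]
    (q k : ℕ) (hq : Fintype.card F = q) (hq4 : q % 4 = 3)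
    (hqk : (4 * k : ℤ) - 5 < (q : ℤ)) :
    (∀ S : Set F, S.ncard = k → MutVisSet (fun u v : F => paleyArc u v) S) ∧
    k ≤ mu (fun u v : F => paleyArc u v) := by
  subst hq
  have hvis : ∀ S : Set F, S.ncard = k → MutVisSet (fun u v : F => paleyArc u v) S :=
    fun S hS ↦ mutVisSet_of_forall_adj (fun _ _ ↦ paleyArc_asymm hq4)
      (fun _ _ ↦ paleyArc_total hq4)
      (fun _ hx _ hy ↦ exists_paleyArc_back_notMem hq4 (by omega) hx hy)
  refine ⟨hvis, ?_⟩
  obtain ⟨S, -, hS⟩ := (Set.univ : Set F).exists_subset_card_eq (n := k)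
    (by rw [Set.ncard_univ, Nat.card_eq_fintype_card]; omega)
  exact hS ▸ ncard_le_mu (hvis S hS)

/-- If `q ≡ 3 (mod 4)` and `q > 4k − 5`, every `k`-element vertex
set of the Paley tournament `P_q` is a mutual-visibility set; hence `μ(P_q) ≥ k`. -/
theorem stmt14 (F : Type*) [Field F] [Fintype F]
    (q k : ℕ) (hq : Fintype.card F = q) (hq4 : q % 4 = 3)
    (hk : 1 ≤ k) (hqk : (4 * k : ℤ) - 5 < (q : ℤ)) :
    (∀ S : Set F, S.ncard = k → MutVisSet (fun u v : F => paleyArc u v) S) ∧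
    k ≤ mu (fun u v : F => paleyArc u v) :=
  stmt14_general F q k hq hq4 hqk
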